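/- For ω ≥ 1, the area of the region Ω^ω_γ = {(x,y) : |y| < φ^ω_γ(x)} equals π² + 4√ω·∫₀^{π/2} [arcsin((γ/√ω)·cos x) + arcsin((1/(γ√ω))·cos x)] dx, for any γ ∈ [1/√ω, √ω]. -/

import Mathlib

/-!
The domain is symmetric in both coordinates, so its area is `4 ∫₀^L φ` with
`L = π/2 + √ω·arcsin(1/(γ√ω))`. On `[0, π/2]` the integral of `φ` is
`π²/4 + √ω ∫ arcsin((γ/√ω) cos x)`. On `[π/2, L]` the substitution `x = π/2 + √ω u` turns it
into `√ω ∫₀^{arcsin(1/c)} arccos(c sin u) du` with `c = γ√ω`. The graphs of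
`u ↦ arccos(c sin u)` and `y ↦ arcsin(cos y / c)` are inverse to each other: both bound the
region `{0 < u, y < π/2, c sin u < cos y}`, so the two integrals are areas of the same set
read along different axes.
-/

open Real Set MeasureTheory

/-- The function `φ^ω_γ`, defined piecewise. -/
noncomputable def phiF (om ga x : ℝ) : ℝ :=
  if |x| ≤ π / 2 then
    π / 2 + Real.sqrt om * Real.arcsin ((ga / Real.sqrt om) * Real.cos x)
  else
    Real.arccos (ga * Real.sqrt om * Real.sin ((|x| - π / 2) / Real.sqrt om))

/-- The domain `Ω^ω_γ = {(x,y) : |y| < φ^ω_γ(x)}` (with `x` in the domain of `φ^ω_γ`). -/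
noncomputable def OmDom (om ga : ℝ) : Set (ℝ × ℝ) :=
  {p | |p.1| ≤ π / 2 + Real.sqrt om * Real.arcsin (1 / (ga * Real.sqrt om)) ∧
       |p.2| < phiF om ga p.1}

theorem lt_arccos_iff_lt_cos {x y : ℝ} (hy : y ∈ Ico 0 π) : y < arccos x ↔ x < cos y := by
  rw [arccos, lt_sub_comm, arcsin_lt_iff_lt_sin' ⟨by linarith [hy.2], by linarith [hy.1]⟩,
    sin_pi_div_two_sub]

theorem setIntegral_eq_of_swap_regionBetween {f g : ℝ → ℝ} {s t : Set ℝ}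
    (hs : MeasurableSet s) (ht : MeasurableSet t) (hf : IntegrableOn f s) (hg : IntegrableOn g t)
    (hf₀ : ∀ x ∈ s, 0 ≤ f x) (hg₀ : ∀ y ∈ t, 0 ≤ g y)
    (hswap : Prod.swap ⁻¹' regionBetween 0 g t = regionBetween 0 f s) :
    ∫ x in s, f x = ∫ y in t, g y := by
  have volume_eq {h : ℝ → ℝ} {u : Set ℝ} (hu : MeasurableSet u) (hh : IntegrableOn h u)
      (hh₀ : ∀ x ∈ u, 0 ≤ h x) :
      volume (regionBetween 0 h u) = ENNReal.ofReal (∫ x in u, h x) := by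
    rw [Measure.volume_eq_prod,
      volume_regionBetween_eq_integral (f := 0) integrableOn_zero hh hu hh₀, sub_zero]
  have hvol : volume (regionBetween 0 f s) = volume (regionBetween 0 g t) := by
    rw [← hswap, Measure.volume_eq_prod]
    exact (Measure.measurePreserving_swap (μ := volume) (ν := volume)).measure_preimage_equiv
      (f := MeasurableEquiv.prodComm) _
  rw [volume_eq hs hf hf₀, volume_eq ht hg hg₀] at hvol
  exact (ENNReal.ofReal_eq_ofReal_iff (setIntegral_nonneg hs hf₀) (setIntegral_nonneg ht hg₀)).1
    hvol

section InverseGraphs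

variable {c u y : ℝ}

theorem lt_arcsin_one_div_and_lt_arccos_mul_sin_iff (hc : 0 < c) (hu : 0 < u) (hy : 0 < y) :
    u < arcsin (1 / c) ∧ y < arccos (c * sin u) ↔
      u < π / 2 ∧ y < π / 2 ∧ c * sin u < cos y := by
  constructor
  · rintro ⟨hua, hyu⟩
    have hu₂ : u < π / 2 := hua.trans_le (arcsin_le_pi_div_two _)
    have hsin : 0 < c * sin u := mul_pos hc (sin_pos_of_pos_of_lt_pi hu (by linarith))
    have hy₂ : y < π / 2 := hyu.trans (arccos_lt_pi_div_two.2 hsin)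
    exact ⟨hu₂, hy₂, (lt_arccos_iff_lt_cos ⟨hy.le, by linarith⟩).1 hyu⟩
  · rintro ⟨hu₂, hy₂, hlt⟩
    refine ⟨(lt_arcsin_iff_sin_lt' ⟨by linarith, hu₂⟩).2 ?_,
      (lt_arccos_iff_lt_cos ⟨hy.le, by linarith⟩).2 hlt⟩
    rw [lt_div_iff₀ hc, mul_comm]
    linarith [cos_le_one y]

theorem lt_pi_div_two_and_lt_arcsin_mul_cos_iff (hc : 0 < c) (hu : 0 < u) :
    y < π / 2 ∧ u < arcsin (1 / c * cos y) ↔ u < π / 2 ∧ y < π / 2 ∧ c * sin u < cos y := by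
  have hsin (hu₂ : u < π / 2) : u < arcsin (1 / c * cos y) ↔ c * sin u < cos y := by
    rw [lt_arcsin_iff_sin_lt' ⟨by linarith, hu₂⟩, one_div_mul_eq_div, lt_div_iff₀ hc, mul_comm]
  constructor
  · rintro ⟨hy₂, hu'⟩
    have hu₂ : u < π / 2 := hu'.trans_le (arcsin_le_pi_div_two _)
    exact ⟨hu₂, hy₂, (hsin hu₂).1 hu'⟩
  · rintro ⟨hu₂, hy₂, hlt⟩
    exact ⟨hy₂, (hsin hu₂).2 hlt⟩

end InverseGraphs

/- For `c < 1`, `arcsin` clamps `1 / c` (and `1 / c * cos y` near `y = 0`) to `π / 2`, which is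
exactly the bound `u < π / 2` of the common region. -/
theorem integral_arccos_mul_sin_eq_integral_arcsin_mul_cos {c : ℝ} (hc : 0 < c) :
    ∫ u in (0 : ℝ)..arcsin (1 / c), arccos (c * sin u)
      = ∫ y in (0 : ℝ)..(π / 2), arcsin (1 / c * cos y) := by
  rw [intervalIntegral.integral_of_le (arcsin_nonneg.2 (by positivity)),
    intervalIntegral.integral_of_le (by positivity), integral_Ioc_eq_integral_Ioo,
    integral_Ioc_eq_integral_Ioo]
  refine setIntegral_eq_of_swap_regionBetween measurableSet_Ioo measurableSet_Ioo
    ((Continuous.integrableOn_Icc (by fun_prop)).mono_set Ioo_subset_Icc_self)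
    ((Continuous.integrableOn_Icc (by fun_prop)).mono_set Ioo_subset_Icc_self)
    (fun _ _ => arccos_nonneg _) (fun y hy => arcsin_nonneg.2 ?_) ?_
  · have := cos_pos_of_mem_Ioo ⟨by linarith [hy.1, pi_pos], hy.2⟩
    positivity
  · ext ⟨u, y⟩
    simp only [regionBetween, mem_preimage, Prod.swap_prod_mk, mem_ofPred_eq, mem_Ioo,
      Pi.zero_apply]
    constructor
    · rintro ⟨⟨hy, hy₂⟩, hu, hlt⟩
      obtain ⟨h₁, h₂⟩ := (lt_arcsin_one_div_and_lt_arccos_mul_sin_iff hc hu hy).2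
        ((lt_pi_div_two_and_lt_arcsin_mul_cos_iff hc hu).1 ⟨hy₂, hlt⟩)
      exact ⟨⟨hu, h₁⟩, hy, h₂⟩
    · rintro ⟨⟨hu, h₁⟩, hy, h₂⟩
      obtain ⟨hy₂, hlt⟩ := (lt_pi_div_two_and_lt_arcsin_mul_cos_iff hc hu).2
        ((lt_arcsin_one_div_and_lt_arccos_mul_sin_iff hc hu hy).1 ⟨h₁, h₂⟩)
      exact ⟨⟨hy, hy₂⟩, hu, hlt⟩

theorem Function.Even.intervalIntegral_neg_self {f : ℝ → ℝ} (hf : f.Even) {L : ℝ}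
    (hint : IntervalIntegrable f volume 0 L) :
    ∫ x in -L..L, f x = 2 * ∫ x in (0 : ℝ)..L, f x := by
  have hint' : IntervalIntegrable f volume (-L) 0 := by
    simpa only [zero_sub, sub_zero, hf _] using (hint.comp_sub_left 0).symm
  have hreflect : ∫ x in -L..0, f x = ∫ x in (0 : ℝ)..L, f x := by
    simpa only [neg_zero, hf _] using (intervalIntegral.integral_comp_neg (a := 0) (b := L) f).symm
  rw [← intervalIntegral.integral_add_adjacent_intervals hint' hint, hreflect, two_mul]

theorem volume_regionBetween_neg_self_Icc {f : ℝ → ℝ} (hf : f.Even) {L : ℝ} (hL : 0 ≤ L)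
    (hint : IntegrableOn f (Icc (-L) L)) (hf₀ : ∀ x ∈ Icc (-L) L, 0 ≤ f x) :
    volume (regionBetween (-f) f (Icc (-L) L))
      = ENNReal.ofReal (4 * ∫ x in (0 : ℝ)..L, f x) := by
  have hint₀ : IntervalIntegrable f volume 0 L :=
    (hint.mono_set (by rw [uIcc_of_le hL]; exact Icc_subset_Icc (by linarith) le_rfl))
      |>.intervalIntegrable
  have htwice : (f - -f) = fun x => 2 * f x := by
    ext x
    simp only [Pi.sub_apply, Pi.neg_apply, sub_neg_eq_add]
    ring
  rw [Measure.volume_eq_prod, volume_regionBetween_eq_integral hint.neg hint measurableSet_Icc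
      (fun x hx => neg_le_self (hf₀ x hx)), integral_Icc_eq_integral_Ioc,
    ← intervalIntegral.integral_of_le (by linarith), htwice, intervalIntegral.integral_const_mul,
    hf.intervalIntegral_neg_self hint₀]
  congr 1
  ring

section Phi

variable (om ga : ℝ)

theorem phiF_even : (phiF om ga).Even := fun x => by
  simp only [phiF, abs_neg, cos_neg]

-- At `|x| = π / 2` both branches equal `π / 2`.
theorem continuous_phiF : Continuous (phiF om ga) := by
  refine Continuous.if_le (by fun_prop) (by fun_prop) continuous_abs continuous_const
    fun x hx => ?_
  rw [← cos_abs, hx]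
  simp

theorem phiF_nonneg (hga : 0 ≤ ga) (x : ℝ) : 0 ≤ phiF om ga x := by
  unfold phiF
  split_ifs with hx
  · have : 0 ≤ cos x := cos_nonneg_of_mem_Icc (abs_le.1 hx)
    have : 0 ≤ arcsin (ga / √om * cos x) := arcsin_nonneg.2 (by positivity)
    positivity
  · exact arccos_nonneg _

theorem phiF_of_pi_div_two_le {x : ℝ} (hx : π / 2 ≤ x) :
    phiF om ga x = arccos (ga * √om * sin ((x - π / 2) / √om)) := by
  rcases hx.eq_or_lt with rfl | hx
  · simp [phiF, abs_of_pos pi_div_two_pos]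
  · rw [phiF, if_neg (by rw [abs_of_pos (pi_div_two_pos.trans hx)]; exact hx.not_ge),
      abs_of_pos (pi_div_two_pos.trans hx)]

theorem omDom_eq_regionBetween :
    OmDom om ga = regionBetween (-phiF om ga) (phiF om ga)
      (Icc (-(π / 2 + √om * arcsin (1 / (ga * √om))))
        (π / 2 + √om * arcsin (1 / (ga * √om)))) := by
  ext p
  simp only [OmDom, regionBetween, mem_ofPred_eq, mem_Icc, mem_Ioo, Pi.neg_apply, abs_le, abs_lt]

theorem integral_phiF_zero_pi_div_two :
    ∫ x in (0 : ℝ)..(π / 2), phiF om ga x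
      = π ^ 2 / 4 + √om * ∫ x in (0 : ℝ)..(π / 2), arcsin (ga / √om * cos x) := by
  have hphi : EqOn (phiF om ga) (fun x => π / 2 + √om * arcsin (ga / √om * cos x))
      (uIcc 0 (π / 2)) := by
    intro x hx
    rw [uIcc_of_le pi_div_two_pos.le] at hx
    rw [phiF, if_pos (abs_le.2 ⟨by linarith [hx.1, pi_pos], hx.2⟩)]
  rw [intervalIntegral.integral_congr hphi, intervalIntegral.integral_add intervalIntegrable_const
      (Continuous.intervalIntegrable (by fun_prop) _ _), intervalIntegral.integral_const,
    intervalIntegral.integral_const_mul, smul_eq_mul]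
  ring

theorem integral_phiF_pi_div_two_add (hom : 0 < om) {a : ℝ} (ha : 0 ≤ a) :
    ∫ x in (π / 2)..(π / 2 + √om * a), phiF om ga x
      = √om * ∫ u in (0 : ℝ)..a, arccos (ga * √om * sin u) := by
  have hs : √om ≠ 0 := (sqrt_pos.2 hom).ne'
  have hphi : EqOn (phiF om ga) (fun x => arccos (ga * √om * sin ((x - π / 2) / √om)))
      (uIcc (π / 2) (π / 2 + √om * a)) := by
    intro x hx
    rw [uIcc_of_le (le_add_of_nonneg_right (mul_nonneg (sqrt_nonneg om) ha))] at hx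
    exact phiF_of_pi_div_two_le om ga hx.1
  rw [intervalIntegral.integral_congr hphi,
    intervalIntegral.integral_comp_sub_right (fun x => arccos (ga * √om * sin (x / √om))),
    intervalIntegral.integral_comp_div (fun u => arccos (ga * √om * sin u)) hs, sub_self,
    add_sub_cancel_left, zero_div, mul_div_cancel_left₀ _ hs, smul_eq_mul]

end Phi

theorem stmt17_general (om ga : ℝ) (hom : 1 ≤ om)
    (hga1 : 1 / Real.sqrt om ≤ ga) :
    volume (OmDom om ga)
      = ENNReal.ofReal (π ^ 2 + 4 * Real.sqrt om *
          ∫ x in (0 : ℝ)..(π / 2),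
            (Real.arcsin ((ga / Real.sqrt om) * Real.cos x)
              + Real.arcsin ((1 / (ga * Real.sqrt om)) * Real.cos x))) := by
  have hom₀ : 0 < om := by linarith
  have hga : 0 < ga := (by positivity : 0 < 1 / √om).trans_le hga1
  have hc : 0 < ga * √om := by positivity
  have ha : 0 ≤ arcsin (1 / (ga * √om)) := arcsin_nonneg.2 (by positivity)
  have hL : π / 2 ≤ π / 2 + √om * arcsin (1 / (ga * √om)) :=
    le_add_of_nonneg_right (mul_nonneg (sqrt_nonneg om) ha)
  have hphi := continuous_phiF om ga
  rw [omDom_eq_regionBetween, volume_regionBetween_neg_self_Icc (phiF_even om ga)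
      (pi_div_two_pos.le.trans hL) hphi.integrableOn_Icc fun x _ => phiF_nonneg om ga hga.le x,
    ← intervalIntegral.integral_add_adjacent_intervals (hphi.intervalIntegrable 0 (π / 2))
      (hphi.intervalIntegrable _ _),
    integral_phiF_zero_pi_div_two, integral_phiF_pi_div_two_add om ga hom₀ ha,
    integral_arccos_mul_sin_eq_integral_arcsin_mul_cos hc,
    intervalIntegral.integral_add (Continuous.intervalIntegrable (by fun_prop) _ _)
      (Continuous.intervalIntegrable (by fun_prop) _ _)]
  congr 1
  ring

/-- For `ω ≥ 1` and `γ ∈ [1/√ω, √ω]`, the area of `Ω^ω_γ` equals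
`π² + 4√ω·∫₀^{π/2} [arcsin((γ/√ω)cos x) + arcsin((1/(γ√ω))cos x)] dx`. -/
theorem stmt17 (om ga : ℝ) (hom : 1 ≤ om)
    (hga1 : 1 / Real.sqrt om ≤ ga) (hga2 : ga ≤ Real.sqrt om) :
    volume (OmDom om ga)
      = ENNReal.ofReal (π ^ 2 + 4 * Real.sqrt om *
          ∫ x in (0 : ℝ)..(π / 2),
            (Real.arcsin ((ga / Real.sqrt om) * Real.cos x)
              + Real.arcsin ((1 / (ga * Real.sqrt om)) * Real.cos x))) :=
  stmt17_general om ga hom hga1
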